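/- arXiv:1902.01016 — 5 statements merged into one kernel-verified Lean document; each statement's English description precedes it below -/
import Mathlib

section
/- Let p > 1 and S > 0 be real numbers, set y_C = S^{−2(p+1)/(p−1)}, and define G(y) = y − S^{p+1} · y^{(p+1)/2} for y ≥ 0. Then there exists a constant C > 0 such that G(y) ≥ C · min{y, y_C − y} for every y ∈ (0, y_C). -/
open Real Set

/-! Write `r = (p - 1)/2`, so that `S ^ (p + 1) = y_C ^ (-r)` and `G(y) = y (1 - (y / y_C) ^ r)`.
On `[0, 1]` the function `t ↦ t ^ r` lies below `t ^ min r 1`, which lies below its tangent line at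
`t = 1`; hence `1 - t ^ r ≥ min r 1 · (1 - t)` and `G(y) ≥ min r 1 · y (y_C - y) / y_C`. Finally
`y (y_C - y) ≥ (y_C / 2) · min {y, y_C - y}`, since the larger of `y` and `y_C - y` is at least
`y_C / 2`. -/

theorem min_mul_one_sub_le_one_sub_rpow {t r : ℝ} (ht₀ : 0 ≤ t) (ht₁ : t ≤ 1) (hr : 0 < r) :
    min r 1 * (1 - t) ≤ 1 - t ^ r := by
  have h_mono : t ^ r ≤ t ^ min r 1 :=
    rpow_le_rpow_of_exponent_ge' ht₀ ht₁ (le_min hr.le zero_le_one) (min_le_left _ _)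
  have h_tangent : t ^ min r 1 ≤ 1 + min r 1 * (t - 1) := by
    simpa using rpow_one_add_le_one_add_mul_self (s := t - 1) (by linarith)
      (le_min hr.le zero_le_one) (min_le_right r 1)
  linarith

theorem half_mul_min_le_mul_sub {y c : ℝ} (hy₀ : 0 ≤ y) (hyc : y ≤ c) :
    c / 2 * min y (c - y) ≤ y * (c - y) := by
  rcases le_total y (c - y) with h | h
  · rw [min_eq_left h]; nlinarith
  · rw [min_eq_right h]; nlinarith

theorem sub_rpow_eq_mul_one_sub_rpow_div {y c : ℝ} (r : ℝ) (hy : 0 < y) (hc : 0 < c) :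
    y - c ^ (-r) * y ^ (r + 1) = y * (1 - (y / c) ^ r) := by
  rw [rpow_add_one hy.ne', rpow_neg hc.le, div_rpow hy.le hc.le]
  ring

theorem min_div_two_mul_min_le_sub_rpow {r c y : ℝ} (hr : 0 < r) (hy : y ∈ Ioo 0 c) :
    min r 1 / 2 * min y (c - y) ≤ y - c ^ (-r) * y ^ (r + 1) := by
  obtain ⟨hy₀, hyc⟩ := hy
  have hc : 0 < c := hy₀.trans hyc
  rw [sub_rpow_eq_mul_one_sub_rpow_div r hy₀ hc]
  calc min r 1 / 2 * min y (c - y) = min r 1 * (c / 2 * min y (c - y)) / c := by field_simp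
    _ ≤ min r 1 * (y * (c - y)) / c := by
        gcongr min r 1 * ?_ / c
        exact half_mul_min_le_mul_sub hy₀.le hyc.le
    _ = y * (min r 1 * (1 - y / c)) := by field_simp
    _ ≤ y * (1 - (y / c) ^ r) := by
        gcongr
        exact min_mul_one_sub_le_one_sub_rpow (div_nonneg hy₀.le hc.le)
          ((div_le_one hc).mpr hyc.le) hr

/-- For `p > 1`, `S > 0`, `y_C = S^{−2(p+1)/(p−1)}` and
`G(y) = y − S^{p+1}·y^{(p+1)/2}`, there is a constant `C > 0` such that
`G(y) ≥ C · min{y, y_C − y}` for every `y ∈ (0, y_C)`. -/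
theorem stmt_3 (p S : ℝ) (hp : 1 < p) (hS : 0 < S)
    (yC : ℝ) (hyC : yC = S ^ (-2 * (p + 1) / (p - 1)))
    (G : ℝ → ℝ)
    (hG : ∀ y : ℝ, 0 ≤ y → G y = y - S ^ (p + 1) * y ^ ((p + 1) / 2)) :
    ∃ C : ℝ, 0 < C ∧ ∀ y ∈ Ioo (0 : ℝ) yC, C * min y (yC - y) ≤ G y := by
  set r := (p - 1) / 2
  have hr : 0 < r := by positivity
  have hS_pow : S ^ (p + 1) = yC ^ (-r) := by
    rw [hyC, ← rpow_mul hS.le]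
    congr 1
    field_simp [(sub_pos.mpr hp).ne']
    ring
  have h_exp : (p + 1) / 2 = r + 1 := by ring
  refine ⟨min r 1 / 2, by positivity, fun y hy => ?_⟩
  rw [hG y hy.1.le, hS_pow, h_exp]
  exact min_div_two_mul_min_le_sub_rpow hr hy
end

section
/- Let p > 1 and let a, b be real numbers with 0 < a < b. Set E = a/2 − b/(p+1), J = a − b, and m = ((p−1)/(2(p+1))) · a^{(p+1)/(p−1)} · b^{−2/(p−1)}. Then J < −(p+1)·(m − E). -/
open Real

/-! With `t = 2/(p-1)` one has `(p+1)/(p-1) = 1 + t`, so `m = ((p-1)/(2(p+1))) · a · (a/b)^t`.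
The claim unfolds to `J = -(p+1)(m - E) - ((p-1)/2) · (a - a (a/b)^t)`, and `a (a/b)^t < a`
because `a < b`. -/

lemma rpow_one_add_mul_rpow_neg_lt {a b t : ℝ} (ha : 0 < a) (hab : a < b) (ht : 0 < t) :
    a ^ (1 + t) * b ^ (-t) < a := by
  have hb : 0 < b := ha.trans hab
  have hratio : (a / b) ^ t < 1 :=
    rpow_lt_one (div_pos ha hb).le ((div_lt_one hb).2 hab) ht
  calc a ^ (1 + t) * b ^ (-t) = a * (a / b) ^ t := by
        rw [rpow_add ha, rpow_one, rpow_neg hb.le, div_rpow ha.le hb.le, mul_assoc, div_eq_mul_inv]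
    _ < a * 1 := mul_lt_mul_of_pos_left hratio ha
    _ = a := mul_one a

/-- For `p > 1` and `0 < a < b`, with `E = a/2 − b/(p+1)`, `J = a − b` and
`m = ((p−1)/(2(p+1)))·a^{(p+1)/(p−1)}·b^{−2/(p−1)}`, one has `J < −(p+1)·(m − E)`. -/
theorem stmt_5 (p a b : ℝ) (hp : 1 < p) (ha : 0 < a) (hab : a < b)
    (E J m : ℝ)
    (hE : E = a / 2 - b / (p + 1))
    (hJ : J = a - b)
    (hm : m = (p - 1) / (2 * (p + 1)) * a ^ ((p + 1) / (p - 1)) * b ^ (-2 / (p - 1))) :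
    J < -(p + 1) * (m - E) := by
  subst hE hJ hm
  have hp1 : 0 < p - 1 := by linarith
  have hexp : (p + 1) / (p - 1) = 1 + 2 / (p - 1) := by field_simp; ring
  have hexp' : -2 / (p - 1) = -(2 / (p - 1)) := neg_div _ _
  rw [hexp, hexp', mul_assoc _ (a ^ _)]
  set q := a ^ (1 + 2 / (p - 1)) * b ^ (-(2 / (p - 1)))
  have hq : q < a := rpow_one_add_mul_rpow_neg_lt ha hab (by positivity)
  calc a - b < a - b + (p - 1) / 2 * (a - q) := by
        have : 0 < (p - 1) / 2 * (a - q) := mul_pos (by positivity) (by linarith)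
        linarith
    _ = -(p + 1) * ((p - 1) / (2 * (p + 1)) * q - (a / 2 - b / (p + 1))) := by
        field_simp
        ring
end

section
/- Let α > 0, let T ∈ (0,∞], and let I : [0,T) → ℝ be twice differentiable with I(t) > 0 for all t ∈ [0,T), I′(0) > 0, and I″(t)·I(t) ≥ (1+α)·I′(t)² for all t ∈ (0,T). Set t̃ = I(0)/(α·I′(0)). Then I(t)^{−α} ≤ I(0)^{−α}·(1 − t/t̃) for every t ∈ [0,T), and consequently T ≤ t̃. -/
open Set ENNReal

/-!
Set `J = I ^ (-α)`. Then `J'' = -α I ^ (-α - 2) (I'' I - (1 + α) I'²) ≤ 0`, so `J` is concave and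
lies below its tangent line at `0`, which is the line `I(0)^{-α} (1 - t / t̃)` vanishing at `t̃`.
Since `J > 0` wherever `I` is defined, `I` cannot be defined up to `t̃`.
-/

theorem concaveOn_rpow_neg_of_mul_deriv_sq_le {D : Set ℝ} (hD : Convex ℝ D) {α : ℝ} (hα : 0 ≤ α)
    {f f' f'' : ℝ → ℝ} (hpos : ∀ x ∈ D, 0 < f x)
    (hf : ∀ x ∈ D, HasDerivWithinAt f (f' x) D x)
    (hf' : ∀ x ∈ interior D, HasDerivWithinAt f' (f'' x) (interior D) x)
    (hineq : ∀ x ∈ interior D, (1 + α) * f' x ^ 2 ≤ f'' x * f x) :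
    ConcaveOn ℝ D (fun x => f x ^ (-α)) := by
  refine concaveOn_of_hasDerivWithinAt2_nonpos hD
    (f' := fun x => f' x * (-α) * f x ^ (-α - 1))
    (f'' := fun x => f'' x * (-α) * f x ^ (-α - 1) +
      f' x * (-α) * (f' x * (-α - 1) * f x ^ (-α - 1 - 1)))
    (fun x hx => (hf x hx).continuousWithinAt.rpow_const (Or.inl (hpos x hx).ne'))
    (fun x hx => ((hf x (interior_subset hx)).mono interior_subset).rpow_const
      (Or.inl (hpos x (interior_subset hx)).ne'))
    (fun x hx => ((hf' x hx).mul_const (-α)).mul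
      (((hf x (interior_subset hx)).mono interior_subset).rpow_const
        (Or.inl (hpos x (interior_subset hx)).ne'))) ?_
  intro x hx
  have hfx := hpos x (interior_subset hx)
  have hpow : f x ^ (-α - 1) = f x ^ (-α - 1 - 1) * f x := by
    rw [← Real.rpow_add_one hfx.ne']; ring_nf
  have hfactor : f'' x * (-α) * f x ^ (-α - 1) +
      f' x * (-α) * (f' x * (-α - 1) * f x ^ (-α - 1 - 1)) =
      -(α * f x ^ (-α - 1 - 1) * (f'' x * f x - (1 + α) * f' x ^ 2)) := by
    rw [hpow]; ring
  rw [hfactor, neg_nonpos]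
  exact mul_nonneg (mul_nonneg hα (Real.rpow_nonneg hfx.le _)) (sub_nonneg.2 (hineq x hx))

theorem rpow_neg_le_of_mul_deriv_sq_le {α a b : ℝ} (hα : 0 ≤ α) (hab : a ≤ b)
    {f f' f'' : ℝ → ℝ} (hpos : ∀ x ∈ Icc a b, 0 < f x)
    (hf : ∀ x ∈ Icc a b, HasDerivWithinAt f (f' x) (Icc a b) x)
    (hf' : ∀ x ∈ Ioo a b, HasDerivWithinAt f' (f'' x) (Ioo a b) x)
    (hineq : ∀ x ∈ Ioo a b, (1 + α) * f' x ^ 2 ≤ f'' x * f x) :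
    f b ^ (-α) ≤ f a ^ (-α) * (1 - α * f' a / f a * (b - a)) := by
  rcases hab.eq_or_lt with rfl | hab
  · simp
  have ha : a ∈ Icc a b := left_mem_Icc.2 hab.le
  have hfa := hpos a ha
  have hconc := concaveOn_rpow_neg_of_mul_deriv_sq_le (convex_Icc a b) hα hpos hf
    (by simpa only [interior_Icc] using hf') (by simpa only [interior_Icc] using hineq)
  have hslope := hconc.slope_le_of_hasDerivWithinAt ha (right_mem_Icc.2 hab.le) hab
    ((hf a ha).rpow_const (p := -α) (Or.inl hfa.ne'))
  rw [slope_def_field, div_le_iff₀ (sub_pos.2 hab)] at hslope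
  have hpow : f a ^ (-α - 1) = f a ^ (-α) / f a := by
    rw [Real.rpow_sub_one hfa.ne']
  calc f b ^ (-α) ≤ f a ^ (-α) + f' a * (-α) * f a ^ (-α - 1) * (b - a) := by linarith
    _ = f a ^ (-α) * (1 - α * f' a / f a * (b - a)) := by rw [hpow]; field_simp; ring

theorem stmt_9_general (α : ℝ) (hα : 0 < α) (T : ℝ≥0∞)
    (I I' I'' : ℝ → ℝ)
    (hpos : ∀ t : ℝ, 0 ≤ t → ENNReal.ofReal t < T → 0 < I t)
    (hI'0 : 0 < I' 0)
    (hI' : ∀ t ∈ {t : ℝ | 0 ≤ t ∧ ENNReal.ofReal t < T},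
      HasDerivWithinAt I (I' t) {t : ℝ | 0 ≤ t ∧ ENNReal.ofReal t < T} t)
    (hI'' : ∀ t ∈ {t : ℝ | 0 ≤ t ∧ ENNReal.ofReal t < T},
      HasDerivWithinAt I' (I'' t) {t : ℝ | 0 ≤ t ∧ ENNReal.ofReal t < T} t)
    (hineq : ∀ t : ℝ, 0 < t → ENNReal.ofReal t < T → (1 + α) * I' t ^ 2 ≤ I'' t * I t) :
    (∀ t : ℝ, 0 ≤ t → ENNReal.ofReal t < T →
      I t ^ (-α) ≤ I 0 ^ (-α) * (1 - t / (I 0 / (α * I' 0)))) ∧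
    T ≤ ENNReal.ofReal (I 0 / (α * I' 0)) := by
  have hIcc : ∀ t, ENNReal.ofReal t < T → Icc 0 t ⊆ {t : ℝ | 0 ≤ t ∧ ENNReal.ofReal t < T} :=
    fun t htT x hx => ⟨hx.1, (ENNReal.ofReal_le_ofReal hx.2).trans_lt htT⟩
  have hbound : ∀ t : ℝ, 0 ≤ t → ENNReal.ofReal t < T →
      I t ^ (-α) ≤ I 0 ^ (-α) * (1 - t / (I 0 / (α * I' 0))) := by
    intro t ht htT
    have hsub := hIcc t htT
    have h := rpow_neg_le_of_mul_deriv_sq_le hα.le ht (fun x hx => hpos x hx.1 (hsub hx).2)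
      (fun x hx => (hI' x (hsub hx)).mono hsub)
      (fun x hx => (hI'' x (hsub (Ioo_subset_Icc_self hx))).mono
        (Ioo_subset_Icc_self.trans hsub))
      (fun x hx => hineq x hx.1 (hsub (Ioo_subset_Icc_self hx)).2)
    rw [div_div_eq_mul_div]
    convert h using 3
    ring
  refine ⟨hbound, ?_⟩
  by_contra! hlt
  set t₀ := I 0 / (α * I' 0)
  have ht₀ : 0 < t₀ := div_pos (hpos 0 le_rfl (by simpa using hlt.bot_lt))
    (mul_pos hα hI'0)
  have h := hbound t₀ ht₀.le hlt
  rw [div_self ht₀.ne', sub_self, mul_zero] at h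
  exact h.not_gt (Real.rpow_pos_of_pos (hpos t₀ ht₀.le hlt) _)

/-- Let `α > 0`, `T ∈ (0,∞]`, and let `I : [0,T) → ℝ` be twice differentiable
with `I(t) > 0` on `[0,T)`, `I′(0) > 0`, and `I″(t)·I(t) ≥ (1+α)·I′(t)²` on `(0,T)`.
With `t̃ = I(0)/(α·I′(0))`, one has `I(t)^{−α} ≤ I(0)^{−α}·(1 − t/t̃)` on `[0,T)`, and
consequently `T ≤ t̃`. Here `[0,T)` is encoded as
`{t : ℝ | 0 ≤ t ∧ ENNReal.ofReal t < T}` with `T : ℝ≥0∞`. -/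
theorem stmt_9 (α : ℝ) (hα : 0 < α) (T : ℝ≥0∞) (hT : 0 < T)
    (I I' I'' : ℝ → ℝ)
    (hpos : ∀ t : ℝ, 0 ≤ t → ENNReal.ofReal t < T → 0 < I t)
    (hI'0 : 0 < I' 0)
    (hI' : ∀ t ∈ {t : ℝ | 0 ≤ t ∧ ENNReal.ofReal t < T},
      HasDerivWithinAt I (I' t) {t : ℝ | 0 ≤ t ∧ ENNReal.ofReal t < T} t)
    (hI'' : ∀ t ∈ {t : ℝ | 0 ≤ t ∧ ENNReal.ofReal t < T},
      HasDerivWithinAt I' (I'' t) {t : ℝ | 0 ≤ t ∧ ENNReal.ofReal t < T} t)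
    (hineq : ∀ t : ℝ, 0 < t → ENNReal.ofReal t < T → (1 + α) * I' t ^ 2 ≤ I'' t * I t) :
    (∀ t : ℝ, 0 ≤ t → ENNReal.ofReal t < T →
      I t ^ (-α) ≤ I 0 ^ (-α) * (1 - t / (I 0 / (α * I' 0)))) ∧
    T ≤ ENNReal.ofReal (I 0 / (α * I' 0)) :=
  stmt_9_general α hα T I I' I'' hpos hI'0 hI' hI'' hineq
end

section
/- Let p > 1, e₀ > 0 and M ≥ 0 be real numbers. Then there exist real numbers α > 0, ε > 0 and A > 0 such that for all real P ≥ 0 and Q ≥ 0: 2(p+1)·(e₀ + Q)·(P + A) − 4(1+α)(1+ε)·P·Q − (1+α)(1+ε⁻¹)·M > 0. -/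
/-!
Take `α = ε = δ` with `4(1+δ)² ≤ 2(p+1)`, possible because `p > 1`. Expanding the first product,
its `P·Q` term then absorbs `4(1+α)(1+ε)·P·Q`, its constant term `2(p+1)·e₀·A` absorbs the
`M`-term once `A` is large, and the remaining terms `2(p+1)(e₀·P + A·Q)` are nonnegative.
-/

lemma exists_pos_one_add_sq_le {K : Type*} [Field K] [LinearOrder K] [IsStrictOrderedRing K]
    {r : K} (hr : 1 < r) : ∃ δ, 0 < δ ∧ (1 + δ) ^ 2 ≤ r := by
  set δ := min 1 ((r - 1) / 3)
  have hδ1 : δ ≤ 1 := min_le_left _ _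
  have hδr : δ ≤ (r - 1) / 3 := min_le_right _ _
  have hδ : 0 < δ := lt_min one_pos (by linarith)
  refine ⟨δ, hδ, ?_⟩
  nlinarith

theorem stmt_10_general (p e₀ M : ℝ) (hp : 1 < p) (he₀ : 0 < e₀) :
    ∃ α ε A : ℝ, 0 < α ∧ 0 < ε ∧ 0 < A ∧
      ∀ P Q : ℝ, 0 ≤ P → 0 ≤ Q →
        0 < 2 * (p + 1) * (e₀ + Q) * (P + A)
            - 4 * (1 + α) * (1 + ε) * P * Q
            - (1 + α) * (1 + ε⁻¹) * M := by
  obtain ⟨δ, hδ, hδp⟩ := exists_pos_one_add_sq_le (r := (p + 1) / 2) (by linarith)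
  obtain ⟨A, hA, hAM⟩ :=
    exists_pos_lt_mul (a := 2 * (p + 1) * e₀) (by positivity) ((1 + δ) * (1 + δ⁻¹) * M)
  refine ⟨δ, δ, A, hδ, hδ, hA, fun P Q hP hQ => ?_⟩
  have hPQ : 4 * (1 + δ) * (1 + δ) * P * Q ≤ 2 * (p + 1) * P * Q := by
    have := mul_le_mul_of_nonneg_right hδp (mul_nonneg hP hQ)
    nlinarith
  have hrest : 0 ≤ 2 * (p + 1) * (e₀ * P + A * Q) := by positivity
  linear_combination hrest + hPQ + hAM

/-- For `p > 1`, `e₀ > 0`, `M ≥ 0`, there exist `α, ε, A > 0` such that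
for all `P, Q ≥ 0`:
`2(p+1)·(e₀ + Q)·(P + A) − 4(1+α)(1+ε)·P·Q − (1+α)(1+ε⁻¹)·M > 0`. -/
theorem stmt_10 (p e₀ M : ℝ) (hp : 1 < p) (he₀ : 0 < e₀) (hM : 0 ≤ M) :
    ∃ α ε A : ℝ, 0 < α ∧ 0 < ε ∧ 0 < A ∧
      ∀ P Q : ℝ, 0 ≤ P → 0 ≤ Q →
        0 < 2 * (p + 1) * (e₀ + Q) * (P + A)
            - 4 * (1 + α) * (1 + ε) * P * Q
            - (1 + α) * (1 + ε⁻¹) * M :=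
  stmt_10_general p e₀ M hp he₀
end

section
/- Let α be a real number with 0 ≤ α < 2. Then lim_{r→0⁺} sup_{x∈ℝ²} ∫_{{y∈ℝ² : |x−y|<r}} log(|x−y|^{−1})·|y|^{−α} dy = 0. Equivalently: for every ε > 0 there exists r₀ ∈ (0,1) such that for every r ∈ (0, r₀] and every x ∈ ℝ², ∫_{{y : |x−y|<r}} log(1/|x−y|)·|y|^{−α} dy < ε. -/
/-!
Write `g(z) = log(1/|z|) |z|^{-α}`. For `y` in the ball `B(x, r)`, `r ≤ 1`, either `y` is at least
as far from `0` as from `x`, and then `|y|^{-α} ≤ |x - y|^{-α}`, or `|y| < |x - y| < r`, and then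
`log(1/|x - y|) ≤ log(1/|y|)`. Hence the integrand is dominated by `g(x - y) + 1_{B(0,r)}(y) g(y)`,
whose integral is `2 ∫_{B(0,r)} g`, independently of `x`. Since `log(1/t) ≤ t^{-s}/s`, the kernel
`g` is bounded by a multiple of `|z|^{-(α+d)/2}` and so is integrable near `0` in dimension
`d > α`; absolute continuity of the integral then makes `∫_{B(0,r)} g` small.
-/

open MeasureTheory Metric Filter Topology Set

lemma log_one_div_nonneg {t : ℝ} (h₀ : 0 ≤ t) (h₁ : t ≤ 1) : 0 ≤ Real.log (1 / t) := by
  rw [one_div, Real.log_inv, neg_nonneg]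
  exact Real.log_nonpos h₀ h₁

variable {E : Type*} [NormedAddCommGroup E]

noncomputable def logKernel (α : ℝ) (z : E) : ℝ := Real.log (1 / ‖z‖) * ‖z‖ ^ (-α)

lemma logKernel_nonneg (α : ℝ) {z : E} (hz : ‖z‖ ≤ 1) : 0 ≤ logKernel α z :=
  mul_nonneg (log_one_div_nonneg (norm_nonneg z) hz) (by positivity)

lemma logKernel_le_rpow (α : ℝ) {s : ℝ} (hs : 0 < s) (z : E) :
    logKernel α z ≤ s⁻¹ * ‖z‖ ^ (-(α + s)) := by
  rcases (norm_nonneg z).eq_or_lt with hz | hz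
  · simp only [logKernel, ← hz, div_zero, Real.log_zero, zero_mul]
    positivity
  have hlog : Real.log (1 / ‖z‖) ≤ s⁻¹ * ‖z‖ ^ (-s) := by
    have := Real.log_le_rpow_div (one_div_nonneg.2 hz.le) hs
    rw [one_div] at this ⊢
    rwa [Real.inv_rpow hz.le, ← Real.rpow_neg hz.le, div_eq_inv_mul] at this
  calc logKernel α z ≤ s⁻¹ * ‖z‖ ^ (-s) * ‖z‖ ^ (-α) :=
        mul_le_mul_of_nonneg_right hlog (by positivity)
    _ = s⁻¹ * ‖z‖ ^ (-(α + s)) := by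
        rw [mul_assoc, ← Real.rpow_add hz, neg_add, add_comm]

lemma log_one_div_norm_sub_mul_rpow_le {α r : ℝ} (hα : 0 ≤ α) (hr : r ≤ 1) {x y : E}
    (hy₀ : y ≠ 0) (hyx : y ≠ x) (hxy : ‖x - y‖ < r) :
    Real.log (1 / ‖x - y‖) * ‖y‖ ^ (-α) ≤
      (ball 0 r).indicator (logKernel α) (x - y) + (ball 0 r).indicator (logKernel α) y := by
  have hxy₀ : 0 < ‖x - y‖ := norm_pos_iff.2 (sub_ne_zero.2 hyx.symm)
  have hy : 0 < ‖y‖ := norm_pos_iff.2 hy₀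
  have hind_nonneg : ∀ z, 0 ≤ (ball (0 : E) r).indicator (logKernel α) z :=
    indicator_nonneg fun z hz ↦ logKernel_nonneg α ((mem_ball_zero_iff.1 hz).le.trans hr)
  rw [indicator_of_mem (mem_ball_zero_iff.2 hxy)]
  rcases le_or_gt ‖x - y‖ ‖y‖ with hle | hlt
  · have hlog : 0 ≤ Real.log (1 / ‖x - y‖) := log_one_div_nonneg hxy₀.le (hxy.le.trans hr)
    have : Real.log (1 / ‖x - y‖) * ‖y‖ ^ (-α) ≤ logKernel α (x - y) :=
      mul_le_mul_of_nonneg_left (Real.rpow_le_rpow_of_nonpos hxy₀ hle (neg_nonpos.2 hα)) hlog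
    linarith [hind_nonneg y]
  · rw [indicator_of_mem (mem_ball_zero_iff.2 (hlt.trans hxy))]
    have : Real.log (1 / ‖x - y‖) * ‖y‖ ^ (-α) ≤ logKernel α y :=
      mul_le_mul_of_nonneg_right
        (Real.log_le_log (by positivity) (one_div_le_one_div_of_le hy hlt.le)) (by positivity)
    linarith [logKernel_nonneg α (hxy.le.trans hr : ‖x - y‖ ≤ 1)]

variable [NormedSpace ℝ E] [FiniteDimensional ℝ E] [MeasurableSpace E] [BorelSpace E]
  [Nontrivial E] {μ : Measure E} [μ.IsAddHaarMeasure]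

lemma integrableOn_ball_logKernel {α : ℝ} (hα : α < Module.finrank ℝ E) :
    IntegrableOn (logKernel α) (ball (0 : E) 1) μ := by
  obtain ⟨s, hs, hαs⟩ : ∃ s : ℝ, 0 < s ∧ α + s < Module.finrank ℝ E :=
    ⟨(Module.finrank ℝ E - α) / 2, by linarith, by linarith⟩
  refine integrableOn_ball_of_norm_le_rpow Module.finrank_pos (C := s⁻¹) hαs ?_
    (by unfold logKernel; fun_prop)
  filter_upwards [ae_restrict_mem measurableSet_ball] with z hz
  rw [Real.norm_of_nonneg (logKernel_nonneg α (mem_ball_zero_iff.1 hz).le)]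
  exact logKernel_le_rpow α hs z

lemma setIntegral_ball_le_two_mul {α r : ℝ} (hα : 0 ≤ α) (hr : r ≤ 1)
    (hint : IntegrableOn (logKernel α) (ball (0 : E) r) μ) (x : E) :
    ∫ y in ball x r, Real.log (1 / ‖x - y‖) * ‖y‖ ^ (-α) ∂μ ≤
      2 * ∫ z in ball 0 r, logKernel α z ∂μ := by
  set G := (ball (0 : E) r).indicator (logKernel α)
  have hG : Integrable G μ := hint.integrable_indicator measurableSet_ball
  have hG_nonneg : 0 ≤ G :=
    indicator_nonneg fun z hz ↦ logKernel_nonneg α ((mem_ball_zero_iff.1 hz).le.trans hr)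
  have hF : Integrable (fun y ↦ G (x - y) + G y) μ := (hG.comp_sub_left x).add hG
  have hF_nonneg : 0 ≤ fun y ↦ G (x - y) + G y := fun y ↦ add_nonneg (hG_nonneg _) (hG_nonneg _)
  calc ∫ y in ball x r, Real.log (1 / ‖x - y‖) * ‖y‖ ^ (-α) ∂μ
      ≤ ∫ y in ball x r, (G (x - y) + G y) ∂μ := by
        refine integral_mono_of_nonneg ?_ hF.integrableOn ?_
        · filter_upwards [ae_restrict_mem measurableSet_ball] with y hy
          have hxy : ‖x - y‖ < 1 := by rw [← dist_eq_norm, dist_comm]; exact hy.trans_le hr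
          exact mul_nonneg (log_one_div_nonneg (norm_nonneg _) hxy.le) (by positivity)
        · filter_upwards [ae_restrict_mem measurableSet_ball,
            ae_restrict_of_ae (Measure.ae_ne μ 0), ae_restrict_of_ae (Measure.ae_ne μ x)]
            with y hy hy₀ hyx
          rw [mem_ball, dist_comm, dist_eq_norm] at hy
          exact log_one_div_norm_sub_mul_rpow_le hα hr hy₀ hyx hy
    _ ≤ ∫ y, (G (x - y) + G y) ∂μ := setIntegral_le_integral hF (ae_of_all _ hF_nonneg)
    _ = 2 * ∫ z in ball 0 r, logKernel α z ∂μ := by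
        rw [integral_add (hG.comp_sub_left x) hG, integral_sub_left_eq_self,
          integral_indicator measurableSet_ball]
        ring

lemma tendsto_addHaar_ball_nhdsGT_zero (x : E) :
    Tendsto (fun r ↦ μ (ball x r)) (𝓝[>] 0) (𝓝 0) := by
  have hpow : Tendsto (fun r : ℝ ↦ ENNReal.ofReal (r ^ Module.finrank ℝ E)) (𝓝[>] 0) (𝓝 0) := by
    have := ENNReal.tendsto_ofReal
      (((continuous_pow (Module.finrank ℝ E)).tendsto (0 : ℝ)).mono_left
        (nhdsWithin_le_nhds (s := Ioi 0)))
    rwa [zero_pow Module.finrank_pos.ne', ENNReal.ofReal_zero] at this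
  have := ENNReal.Tendsto.mul_const hpow (.inr (measure_ball_lt_top (μ := μ) (x := 0) (r := 1)).ne)
  rw [zero_mul] at this
  refine this.congr' ?_
  filter_upwards [self_mem_nhdsWithin] with r hr
  exact (μ.addHaar_ball x (le_of_lt hr)).symm

lemma tendsto_setIntegral_ball_nhdsGT_zero {F : Type*} [NormedAddCommGroup F] [NormedSpace ℝ F]
    {f : E → F} {x : E} {R : ℝ} (hR : 0 < R) (hf : IntegrableOn f (ball x R) μ) :
    Tendsto (fun r ↦ ∫ z in ball x r, f z ∂μ) (𝓝[>] 0) (𝓝 0) := by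
  have hμ : Tendsto (fun r ↦ μ.restrict (ball x R) (ball x r)) (𝓝[>] 0) (𝓝 0) :=
    tendsto_of_tendsto_of_tendsto_of_le_of_le tendsto_const_nhds
      (tendsto_addHaar_ball_nhdsGT_zero x) (fun _ ↦ zero_le)
      (fun _ ↦ Measure.restrict_apply_le _ _)
  refine (hf.tendsto_setIntegral_nhds_zero hμ).congr' ?_
  filter_upwards [Ioo_mem_nhdsGT hR] with r hr
  rw [Measure.restrict_restrict measurableSet_ball,
    inter_eq_left.2 (ball_subset_ball hr.2.le)]

/-- For `0 ≤ α < 2`,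
`lim_{r→0⁺} sup_{x∈ℝ²} ∫_{|x−y|<r} log(|x−y|^{−1}) |y|^{−α} dy = 0`; equivalently, for every
`ε > 0` there is `r₀ ∈ (0,1)` such that for all `0 < r ≤ r₀` and all `x ∈ ℝ²`,
`∫_{|x−y|<r} log(1/|x−y|) |y|^{−α} dy < ε`. -/
theorem stmt_15 (α : ℝ) (hα₀ : 0 ≤ α) (hα₂ : α < 2) :
    ∀ ε : ℝ, 0 < ε → ∃ r₀ : ℝ, 0 < r₀ ∧ r₀ < 1 ∧
      ∀ r : ℝ, 0 < r → r ≤ r₀ → ∀ x : EuclideanSpace ℝ (Fin 2),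
        (∫ y in ball x r, Real.log (1 / ‖x - y‖) * ‖y‖ ^ (-α) ∂volume) < ε := by
  intro ε hε
  have hint : IntegrableOn (logKernel α) (ball (0 : EuclideanSpace ℝ (Fin 2)) 1) volume :=
    integrableOn_ball_logKernel (by simpa using hα₂)
  have hlim := (tendsto_setIntegral_ball_nhdsGT_zero one_pos hint).const_mul 2
  rw [mul_zero] at hlim
  obtain ⟨r₀, hsmall, hr₀, hr₀₁⟩ :=
    ((hlim.eventually (gt_mem_nhds hε)).and (Ioo_mem_nhdsGT one_pos)).exists
  refine ⟨r₀, hr₀, hr₀₁, fun r _ hrr₀ x ↦ ?_⟩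
  calc ∫ y in ball x r, Real.log (1 / ‖x - y‖) * ‖y‖ ^ (-α) ∂volume
      ≤ 2 * ∫ z in ball 0 r, logKernel α z ∂volume :=
        setIntegral_ball_le_two_mul hα₀ (hrr₀.trans hr₀₁.le)
          (hint.mono_set (ball_subset_ball (hrr₀.trans hr₀₁.le))) x
    _ ≤ 2 * ∫ z in ball (0 : EuclideanSpace ℝ (Fin 2)) r₀, logKernel α z ∂volume := by
        gcongr
        · filter_upwards [ae_restrict_mem measurableSet_ball] with z hz
          exact logKernel_nonneg α ((mem_ball_zero_iff.1 hz).le.trans hr₀₁.le)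
        · exact hint.mono_set (ball_subset_ball hr₀₁.le)
    _ < ε := hsmall
end
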